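/- A fragment w[b..i-1] is an abelian run with period P if and only if it is an anchored run with period P (for some anchor) and for every residue k', B_{i-1}[k'] ≥ b and B_i[k'] > b. -/

import Mathlib

open scoped BigOperators

variable {α : Type*} [DecidableEq α] [Fintype α]

/-- Parikh vector of a word: counts of each letter. -/
def parikh (w : List α) (a : α) : ℕ := w.count a

/-- Componentwise containment of Parikh vectors. -/
def PSub (P Q : α → ℕ) : Prop := ∀ a, P a ≤ Q a

/-- Strict containment of Parikh vectors. -/
def PSSub (P Q : α → ℕ) : Prop := PSub P Q ∧ P ≠ Q

/-- Norm of a Parikh vector: sum of its components. -/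
def pnorm (P : α → ℕ) : ℕ := ∑ a, P a

/-- Fragment w[i..j] (both endpoints included). -/
def frag (w : List α) (i j : ℕ) : List α := (w.drop i).take (j + 1 - i)

/-- `IsPF P w k u` : w = u 0 ++ u 1 ++ ⋯ ++ u k is a periodic factorization of w
with respect to P: the cores u 1, …, u (k-1) have Parikh vector P and the head u 0
and tail u k have Parikh vector strictly contained in P. -/
def IsPF (P : α → ℕ) (w : List α) (k : ℕ) (u : ℕ → List α) : Prop :=
  1 ≤ k ∧ w = ((List.range (k + 1)).map u).flatten ∧
  (∀ i, 0 < i → i < k → parikh (u i) = P) ∧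
  PSSub (parikh (u 0)) P ∧ PSSub (parikh (u k)) P

/-- Fragment w[i..j] has abelian period P. -/
def HasPeriod (P : α → ℕ) (w : List α) (i j : ℕ) : Prop :=
  ∃ m u, IsPF P (frag w i j) m u

/-- Fragment w[i..j] has abelian period P anchored at k : there is a periodic
factorization whose cores start (within w) at positions ≡ k (mod |P|). -/
def HasAnchPeriod (P : α → ℕ) (w : List α) (i j k : ℕ) : Prop :=
  ∃ m u, IsPF P (frag w i j) m u ∧ (i + (u 0).length) % pnorm P = k % pnorm P

/-- Fragment w[i..j] is periodic with period P anchored at k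
(factorization with at least two cores). -/
def PeriodicAnch (P : α → ℕ) (w : List α) (i j k : ℕ) : Prop :=
  ∃ m u, 3 ≤ m ∧ IsPF P (frag w i j) m u ∧
    (i + (u 0).length) % pnorm P = k % pnorm P

/-- Fragment w[i..j] is periodic with period P (at least two cores, any anchor). -/
def APeriodic (P : α → ℕ) (w : List α) (i j : ℕ) : Prop :=
  ∃ m u, 3 ≤ m ∧ IsPF P (frag w i j) m u

/-- k-anchored abelian run with period P. -/
def AnchoredRun (P : α → ℕ) (w : List α) (i j k : ℕ) : Prop :=
  i ≤ j ∧ j < w.length ∧ PeriodicAnch P w i j k ∧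
  (i = 0 ∨ ¬ PeriodicAnch P w (i - 1) j k) ∧
  (j + 1 = w.length ∨ ¬ PeriodicAnch P w i (j + 1) k)

/-- Abelian run with period P. -/
def AbelianRun (P : α → ℕ) (w : List α) (i j : ℕ) : Prop :=
  i ≤ j ∧ j < w.length ∧ APeriodic P w i j ∧
  (i = 0 ∨ ¬ APeriodic P w (i - 1) j) ∧
  (j + 1 = w.length ∨ ¬ APeriodic P w i (j + 1))

/-- B_i[k]: the starting position of the longest suffix of w[0..i] having abelian
period P anchored at k (⊤ = ∞ if no such suffix exists). -/
noncomputable def Bfun (P : α → ℕ) (w : List α) (i k : ℕ) : ℕ∞ :=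
  sInf {b : ℕ∞ | ∃ s : ℕ, b = (s : ℕ∞) ∧ s ≤ i + 1 ∧ HasAnchPeriod P w s i k}

/-!
Suffixes of a word with abelian period `P` again have abelian period `P`. Conversely, if `v` has
abelian period `P` and some suffix `y` of `v` is periodic (at least two cores), then so is `v`:
if the factorization of `v` had at most one core, counting lengths shows that its head would
contain everything of `v` in front of the cores of `y`, and that prefix is then a proper head in
front of at least two cores. Prefixes are handled by reversing words. Consequently
`B_{i-1}[k] < b` for some `k` exactly when `w[b-1..i-1]` is periodic, and `B_i[k] ≤ b` for some
`k` exactly when `w[b..i]` is periodic, so the conditions on `B` are the two maximality conditions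
of an abelian run.
-/

open List

section Lists

variable {β : Type*} {w : List β}

theorem map_range_getD (l : List β) (d : β) :
    (range l.length).map (fun i => l.getD i d) = l :=
  ext_getElem (by simp) fun i _ h => by simp [h]

theorem frag_eq_drop {s b e : ℕ} (h : s ≤ b) : frag w b e = (frag w s e).drop (b - s) := by
  unfold frag
  rw [drop_take, drop_drop, Nat.add_sub_cancel' h]
  congr 1
  omega

theorem frag_prefix (b : ℕ) {j e : ℕ} (h : j ≤ e) : frag w b j <+: frag w b e := by
  unfold frag
  rw [show j + 1 - b = min (j + 1 - b) (e + 1 - b) by omega, ← take_take]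
  exact take_prefix _ _

end Lists

section Factorizations

variable {β : Type*} [DecidableEq β] {P : β → ℕ}

theorem parikh_reverse (v : List β) : parikh v.reverse = parikh v :=
  funext fun _ => count_reverse

structure PFactors (P : β → ℕ) (v h : List β) (cs : List (List β)) (t : List β) : Prop where
  eq : v = h ++ cs.flatten ++ t
  core : ∀ c ∈ cs, parikh c = P
  head : PSSub (parikh h) P
  tail : PSSub (parikh t) P

def HasAbelPeriod (P : β → ℕ) (v : List β) : Prop :=
  ∃ h cs t, PFactors P v h cs t

def IsAbelPeriodic (P : β → ℕ) (v : List β) : Prop :=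
  ∃ h cs t, PFactors P v h cs t ∧ 2 ≤ cs.length

theorem IsPF.exists_pFactors {v : List β} {m : ℕ} {u : ℕ → List β} (hu : IsPF P v m u) :
    ∃ cs, cs.length + 1 = m ∧ PFactors P v (u 0) cs (u m) := by
  obtain ⟨hm, hv, hcore, hh, ht⟩ := hu
  obtain ⟨m, rfl⟩ : ∃ m', m = m' + 1 := ⟨m - 1, by omega⟩
  refine ⟨(range m).map fun j => u (j + 1), by simp, ⟨?_, ?_, hh, ht⟩⟩
  · rw [hv, range_succ_eq_map, range_succ]
    simp [Function.comp_def]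
  · simp only [mem_map, mem_range]
    rintro _ ⟨j, hj, rfl⟩
    exact hcore _ j.succ_pos (by omega)

theorem PFactors.isPF {v h t : List β} {cs : List (List β)} (hf : PFactors P v h cs t) :
    IsPF P v (cs.length + 1) fun i => (h :: (cs ++ [t])).getD i [] := by
  refine ⟨by omega, ?_, fun i hi0 hi => ?_, by simpa using hf.head, by simpa using hf.tail⟩
  · rw [show cs.length + 1 + 1 = (h :: (cs ++ [t])).length by simp, map_range_getD, hf.eq]
    simp
  · obtain ⟨j, rfl⟩ : ∃ j, i = j + 1 := ⟨i - 1, by omega⟩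
    have hj : j < cs.length := by omega
    simpa [getElem?_append_left hj, getElem?_eq_getElem hj] using hf.core _ (getElem_mem hj)

theorem PFactors.reverse {v h t : List β} {cs : List (List β)} (hf : PFactors P v h cs t) :
    PFactors P v.reverse t.reverse (cs.map List.reverse).reverse h.reverse where
  eq := by simp [hf.eq, reverse_flatten]
  core := by
    simp only [mem_reverse, mem_map]
    rintro _ ⟨c, hc, rfl⟩
    rw [parikh_reverse, hf.core c hc]
  head := by simpa [parikh_reverse] using hf.tail
  tail := by simpa [parikh_reverse] using hf.head

theorem HasAbelPeriod.reverse {v : List β} (hv : HasAbelPeriod P v) :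
    HasAbelPeriod P v.reverse :=
  let ⟨_, _, _, hf⟩ := hv
  ⟨_, _, _, hf.reverse⟩

theorem IsAbelPeriodic.reverse {v : List β} (hv : IsAbelPeriodic P v) :
    IsAbelPeriodic P v.reverse :=
  let ⟨_, _, _, hf, hcs⟩ := hv
  ⟨_, _, _, hf.reverse, by simpa using hcs⟩

theorem aPeriodic_iff {w : List β} {i j : ℕ} :
    APeriodic P w i j ↔ IsAbelPeriodic P (frag w i j) := by
  constructor
  · rintro ⟨m, u, hm, hu⟩
    obtain ⟨cs, hcs, hf⟩ := hu.exists_pFactors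
    exact ⟨_, cs, _, hf, by omega⟩
  · rintro ⟨h, cs, t, hf, hcs⟩
    exact ⟨_, _, by omega, hf.isPF⟩

variable [Fintype β]

theorem pnorm_parikh (v : List β) : pnorm (parikh v) = v.length := by
  simpa [pnorm, parikh] using
    Multiset.sum_count_eq_card (s := Finset.univ) (m := (v : Multiset β)) fun a _ =>
      Finset.mem_univ a

theorem length_lt_pnorm_of_pssub {v : List β} (h : PSSub (parikh v) P) : v.length < pnorm P := by
  obtain ⟨hle, hne⟩ := h
  obtain ⟨a, ha⟩ := Function.ne_iff.mp hne
  rw [← pnorm_parikh]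
  exact Finset.sum_lt_sum (fun a _ => hle a) ⟨a, Finset.mem_univ a, lt_of_le_of_ne (hle a) ha⟩

theorem length_eq_pnorm_of_parikh_eq {c : List β} (h : parikh c = P) : c.length = pnorm P := by
  rw [← h, pnorm_parikh]

theorem length_flatten_of_parikh_eq {cs : List (List β)} (h : ∀ c ∈ cs, parikh c = P) :
    cs.flatten.length = cs.length * pnorm P := by
  rw [length_flatten, map_congr_left fun c hc => length_eq_pnorm_of_parikh_eq (h c hc),
    map_const', sum_replicate, smul_eq_mul]

theorem pssub_parikh_of_sublist {y z : List β} (hyz : y <+ z) (hz : PSub (parikh z) P)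
    (hy : y.length < pnorm P) : PSSub (parikh y) P :=
  ⟨fun a => (hyz.count_le a).trans (hz a), fun e => by rw [← e, pnorm_parikh] at hy; omega⟩

theorem PSSub.of_sublist {y z : List β} (hz : PSSub (parikh z) P) (hyz : y <+ z) :
    PSSub (parikh y) P :=
  pssub_parikh_of_sublist hyz hz.1 (hyz.length_le.trans_lt (length_lt_pnorm_of_pssub hz))

theorem exists_drop_append_flatten {h : List β} {cs : List (List β)}
    (hh : PSSub (parikh h) P) (hcs : ∀ c ∈ cs, parikh c = P) (n : ℕ) :
    ∃ (h' : List β) (cs' : List (List β)), (h ++ cs.flatten).drop n = h' ++ cs'.flatten ∧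
      PSSub (parikh h') P ∧ ∀ c ∈ cs', parikh c = P := by
  induction cs generalizing h n with
  | nil => exact ⟨h.drop n, [], by simp, hh.of_sublist (drop_sublist _ _), by simp⟩
  | cons c cs ih =>
    by_cases hn : n ≤ h.length
    · exact ⟨h.drop n, c :: cs, drop_append_of_le_length hn, hh.of_sublist (drop_sublist _ _),
        hcs⟩
    have hp := length_lt_pnorm_of_pssub hh
    have hc := length_eq_pnorm_of_parikh_eq (hcs c mem_cons_self)
    have hh' : PSSub (parikh (c.drop 1)) P :=
      pssub_parikh_of_sublist (drop_sublist _ _) (fun a => (congrFun (hcs c mem_cons_self) a).le)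
        (by simp only [length_drop]; omega)
    obtain ⟨h', cs', he, hh', hcs'⟩ :=
      ih hh' (fun d hd => hcs d (mem_cons_of_mem c hd)) (n - h.length - 1)
    refine ⟨h', cs', ?_, hh', hcs'⟩
    rw [← he, flatten_cons, drop_append, drop_eq_nil_of_le (show h.length ≤ n by omega),
      nil_append, ← drop_append_of_le_length (l₂ := cs.flatten) (show 1 ≤ c.length by omega),
      drop_drop]
    congr 1
    omega

theorem HasAbelPeriod.drop {v : List β} (hv : HasAbelPeriod P v) (n : ℕ) :
    HasAbelPeriod P (v.drop n) := by
  obtain ⟨h, cs, t, hf⟩ := hv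
  obtain ⟨h', cs', he, hh', hcs'⟩ := exists_drop_append_flatten hf.head hf.core n
  exact ⟨h', cs', _, ⟨by rw [hf.eq, drop_append, he], hcs', hh',
    hf.tail.of_sublist (drop_sublist _ _)⟩⟩

theorem IsAbelPeriodic.of_suffix {v y : List β} (hy : IsAbelPeriodic P y)
    (hv : HasAbelPeriod P v) (hyv : y <:+ v) : IsAbelPeriodic P v := by
  obtain ⟨h, cs, t, hf⟩ := hv
  obtain ⟨u₀, CS, uₘ, hg, hCS⟩ := hy
  by_cases hcs : 2 ≤ cs.length
  · exact ⟨h, cs, t, hf, hcs⟩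
  obtain ⟨x, rfl⟩ := hyv
  have hlen : (x ++ u₀).length ≤ h.length := by
    have hv := congrArg length hf.eq
    have hy := congrArg length hg.eq
    simp only [length_append, length_flatten_of_parikh_eq hf.core,
      length_flatten_of_parikh_eq hg.core] at hv hy
    have := length_lt_pnorm_of_pssub hf.tail
    have := Nat.mul_le_mul_right (pnorm P) (show cs.length ≤ 1 by omega)
    have := Nat.mul_le_mul_right (pnorm P) hCS
    simp only [length_append]
    omega
  have hpre : x ++ u₀ <+: h :=
    prefix_of_prefix_length_le (l₃ := x ++ y) ⟨CS.flatten ++ uₘ, by simp [hg.eq]⟩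
      ⟨cs.flatten ++ t, by rw [hf.eq, append_assoc]⟩ hlen
  exact ⟨x ++ u₀, CS, uₘ,
    ⟨by simp [hg.eq], hg.core, hf.head.of_sublist hpre.sublist, hg.tail⟩, hCS⟩

theorem IsAbelPeriodic.of_prefix {v y : List β} (hy : IsAbelPeriodic P y)
    (hv : HasAbelPeriod P v) (hyv : y <+: v) : IsAbelPeriodic P v := by
  simpa using (hy.reverse.of_suffix hv.reverse (reverse_suffix.2 hyv)).reverse

end Factorizations

section Runs

variable {P : α → ℕ} {w : List α}

theorem HasAnchPeriod.hasAbelPeriod {i j k : ℕ} (h : HasAnchPeriod P w i j k) :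
    HasAbelPeriod P (frag w i j) :=
  let ⟨_, _, hu, _⟩ := h
  let ⟨_, _, hf⟩ := hu.exists_pFactors
  ⟨_, _, _, hf⟩

theorem PeriodicAnch.aPeriodic {i j k : ℕ} (h : PeriodicAnch P w i j k) : APeriodic P w i j :=
  let ⟨m, u, hm, hu, _⟩ := h
  ⟨m, u, hm, hu⟩

theorem APeriodic.exists_periodicAnch {i j : ℕ} (h : APeriodic P w i j) :
    ∃ k, PeriodicAnch P w i j k :=
  let ⟨m, u, hm, hu⟩ := h
  ⟨_, m, u, hm, hu, rfl⟩

theorem APeriodic.exists_hasAnchPeriod {i j : ℕ} (h : APeriodic P w i j) :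
    ∃ k, HasAnchPeriod P w i j k :=
  let ⟨m, u, _, hu⟩ := h
  ⟨_, m, u, hu, rfl⟩

variable {n k b : ℕ}

theorem le_Bfun_iff :
    (b : ℕ∞) ≤ Bfun P w n k ↔ ∀ s ≤ n + 1, HasAnchPeriod P w s n k → b ≤ s := by
  simp only [Bfun, le_sInf_iff, Set.mem_ofPred_eq]
  constructor
  · exact fun H s hs ha => by exact_mod_cast H s ⟨s, rfl, hs, ha⟩
  · rintro H _ ⟨s, rfl, hs, ha⟩
    exact_mod_cast H s hs ha

theorem lt_Bfun_iff :
    (b : ℕ∞) < Bfun P w n k ↔ ∀ s ≤ n + 1, HasAnchPeriod P w s n k → b < s := by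
  rw [← ENat.add_one_le_iff (ENat.natCast_ne_top b), ← Nat.cast_succ, le_Bfun_iff]
  rfl

theorem leftMaximal_iff_forall_le_Bfun {j : ℕ} (hbj : b ≤ j) (hper : APeriodic P w b j) :
    (b = 0 ∨ ¬ APeriodic P w (b - 1) j) ↔ ∀ k, (b : ℕ∞) ≤ Bfun P w j k := by
  constructor
  · intro hmax k
    refine le_Bfun_iff.2 fun s _ hs => ?_
    by_contra! hsb
    refine hmax.resolve_left (by omega) (aPeriodic_iff.2 ?_)
    have hext : HasAbelPeriod P (frag w (b - 1) j) := by
      rw [frag_eq_drop (show s ≤ b - 1 by omega)]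
      exact hs.hasAbelPeriod.drop _
    have hsuf : frag w b j <:+ frag w (b - 1) j := by
      rw [frag_eq_drop (b.sub_le 1)]
      exact drop_suffix _ _
    exact (aPeriodic_iff.1 hper).of_suffix hext hsuf
  · refine fun hB => or_iff_not_imp_left.2 fun hb hext => ?_
    obtain ⟨k, hk⟩ := hext.exists_hasAnchPeriod
    have := le_Bfun_iff.1 (hB k) (b - 1) (by omega) hk
    omega

theorem not_aPeriodic_succ_iff_forall_lt_Bfun {j : ℕ} (hbj : b ≤ j) (hper : APeriodic P w b j) :
    ¬ APeriodic P w b (j + 1) ↔ ∀ k, (b : ℕ∞) < Bfun P w (j + 1) k := by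
  constructor
  · intro hmax k
    refine lt_Bfun_iff.2 fun s _ hs => ?_
    by_contra! hbs
    refine hmax (aPeriodic_iff.2 ?_)
    have hext : HasAbelPeriod P (frag w b (j + 1)) := by
      rw [frag_eq_drop hbs]
      exact hs.hasAbelPeriod.drop _
    exact (aPeriodic_iff.1 hper).of_prefix hext (frag_prefix b j.le_succ)
  · intro hB hext
    obtain ⟨k, hk⟩ := hext.exists_hasAnchPeriod
    have := lt_Bfun_iff.1 (hB k) b (by omega) hk
    omega

end Runs

/-- A fragment w[b..i-1] is an abelian run with period P iff it is an anchored
run with period P for some anchor and for every residue k', B_{i-1}[k'] ≥ b and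
B_i[k'] > b. -/
theorem abelianRun_iff_B (P : α → ℕ) (w : List α) (i b : ℕ)
    (hi1 : 1 ≤ i) (hi2 : i < w.length) :
    AbelianRun P w b (i - 1) ↔
      ((∃ k, AnchoredRun P w b (i - 1) k) ∧
       ∀ k', (b : ℕ∞) ≤ Bfun P w (i - 1) k' ∧ (b : ℕ∞) < Bfun P w i k') := by
  obtain ⟨j, rfl⟩ : ∃ j, i = j + 1 := ⟨i - 1, by omega⟩
  simp only [Nat.add_sub_cancel]
  constructor
  · rintro ⟨hbj, hj, hper, hleft, hright⟩
    obtain ⟨k, hk⟩ := hper.exists_periodicAnch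
    refine ⟨⟨k, hbj, hj, hk, hleft.imp_right (mt PeriodicAnch.aPeriodic),
      hright.imp_right (mt PeriodicAnch.aPeriodic)⟩, fun k' => ⟨?_, ?_⟩⟩
    · exact (leftMaximal_iff_forall_le_Bfun hbj hper).1 hleft k'
    · exact (not_aPeriodic_succ_iff_forall_lt_Bfun hbj hper).1 (hright.resolve_left (by omega)) k'
  · rintro ⟨⟨k, hbj, hj, hk, -, -⟩, hB⟩
    have hper := hk.aPeriodic
    exact ⟨hbj, hj, hper, (leftMaximal_iff_forall_le_Bfun hbj hper).2 fun k' => (hB k').1,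
      Or.inr ((not_aPeriodic_succ_iff_forall_lt_Bfun hbj hper).2 fun k' => (hB k').2)⟩
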